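/- Let A be an algebra with a Mal'cev polynomial, let k ∈ ℕ and a1,...,ak, b1,...,bk ∈ A. Then the congruence generated by {(a1,b1),...,(ak,bk)} equals {(p(a1,...,ak), p(b1,...,bk)) : p a k-ary polynomial operation of A}. -/

import Mathlib

/-- A clone on a set `A`: a family of finitary operations containing all
projections and closed under composition. -/
structure Clone (A : Type) where
  ops : ∀ n : ℕ, Set ((Fin n → A) → A)
  proj_mem : ∀ (n : ℕ) (i : Fin n), (fun x => x i) ∈ ops n
  comp_mem : ∀ (m n : ℕ) (f : (Fin n → A) → A) (g : Fin n → (Fin m → A) → A),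
      f ∈ ops n → (∀ i, g i ∈ ops m) → (fun x => f (fun i => g i x)) ∈ ops m

/-- `X ⊆ A^n` is algebraic w.r.t. a family of operations `F`: it is the solution
set of some system of equations between `n`-ary members of `F`. -/
def IsAlgSet {A : Type} (F : ∀ n : ℕ, Set ((Fin n → A) → A)) (n : ℕ)
    (X : Set (Fin n → A)) : Prop :=
  ∃ (I : Type) (p q : I → (Fin n → A) → A),
    (∀ i, p i ∈ F n) ∧ (∀ i, q i ∈ F n) ∧ X = {x | ∀ i, p i x = q i x}

/-- Equational additivity: unions of algebraic sets of the same arity are algebraic. -/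
def EqAdditive {A : Type} (F : ∀ n : ℕ, Set ((Fin n → A) → A)) : Prop :=
  ∀ (n : ℕ) (X Y : Set (Fin n → A)),
    IsAlgSet F n X → IsAlgSet F n Y → IsAlgSet F n (X ∪ Y)

/-- The quaternary relation `Δ_A`. -/
def Delta (A : Type) : Set (Fin 4 → A) := {x | x 0 = x 1 ∨ x 2 = x 3}
/-- Polynomial operations over a clone: generated by the clone, the constants
and the projections, closed under composition. -/
inductive PolyOp {A : Type} (C : Clone A) : ∀ n : ℕ, ((Fin n → A) → A) → Prop
  | base {n : ℕ} {f : (Fin n → A) → A} : f ∈ C.ops n → PolyOp C n f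
  | const {n : ℕ} (a : A) : PolyOp C n (fun _ => a)
  | proj {n : ℕ} (i : Fin n) : PolyOp C n (fun x => x i)
  | comp {m n : ℕ} {f : (Fin n → A) → A} {g : Fin n → (Fin m → A) → A} :
      PolyOp C n f → (∀ i, PolyOp C m (g i)) → PolyOp C m (fun x => f (fun i => g i x))

/-- The clone of polynomial operations of the algebra `(A; C)`. -/
def PolClone {A : Type} (C : Clone A) : Clone A where
  ops n := {f | PolyOp C n f}
  proj_mem n i := PolyOp.proj i
  comp_mem _ _ _ _ hf hg := PolyOp.comp hf hg

/-- A congruence of the algebra `(A; C)`: an equivalence relation compatible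
with all operations of the clone. -/
def IsCong {A : Type} (C : Clone A) (θ : A → A → Prop) : Prop :=
  Equivalence θ ∧ ∀ (n : ℕ) (f : (Fin n → A) → A), f ∈ C.ops n →
    ∀ x y : Fin n → A, (∀ i, θ (x i) (y i)) → θ (f x) (f y)

/-- `d` is a Mal'cev operation. -/
def IsMalcev {A : Type} (d : A → A → A → A) : Prop :=
  ∀ a b : A, d a b b = a ∧ d b b a = a

/-- The algebra `(A; C)` has a Mal'cev polynomial. -/
def HasMalcevPoly {A : Type} (C : Clone A) : Prop :=
  ∃ d : A → A → A → A,
    (fun x : Fin 3 → A => d (x 0) (x 1) (x 2)) ∈ (PolClone C).ops 3 ∧ IsMalcev d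

/-- `α` centralizes `β` modulo `η` (the term condition). -/
def Centralizes {A : Type} (C : Clone A) (α β η : A → A → Prop) : Prop :=
  ∀ (m k : ℕ) (p : (Fin (m + k) → A) → A), p ∈ (PolClone C).ops (m + k) →
    ∀ (a b : Fin m → A) (u v : Fin k → A),
      (∀ i, α (a i) (b i)) → (∀ i, β (u i) (v i)) →
      η (p (Fin.append a u)) (p (Fin.append a v)) →
      η (p (Fin.append b u)) (p (Fin.append b v))

/-- The term condition commutator `[α, β]`: the least congruence `η` such that
`α` centralizes `β` modulo `η` (realized as the intersection of all such). -/
def CommRel {A : Type} (C : Clone A) (α β : A → A → Prop) (x y : A) : Prop :=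
  ∀ η : A → A → Prop, IsCong C η → Centralizes C α β η → η x y

/-- The congruence of `(A; C)` generated by a binary relation `r`. -/
def CongGen {A : Type} (C : Clone A) (r : A → A → Prop) (x y : A) : Prop :=
  ∀ θ : A → A → Prop, IsCong C θ → (∀ a b, r a b → θ a b) → θ x y

/-! Every congruence is compatible with the polynomial operations, so it contains the pairs
`(p a, p b)` as soon as it contains the `(a i, b i)`. Conversely these pairs always form a
reflexive compatible relation containing the generators, and a Mal'cev polynomial `d` makes it
symmetric and transitive: if `x = p a`, `y = p b = q a` and `z = q b`, then
`w ↦ d (p a) (p w) (p b)` takes `a, b` to `y, x`, and `w ↦ d (p w) (p b) (q w)` takes `a, b`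
to `x, z`. -/

namespace PolyOp

variable {A : Type} {C : Clone A}

theorem comp₃ {d : A → A → A → A} (hd : PolyOp C 3 fun x => d (x 0) (x 1) (x 2))
    {k : ℕ} {p q r : (Fin k → A) → A} (hp : PolyOp C k p) (hq : PolyOp C k q)
    (hr : PolyOp C k r) : PolyOp C k fun z => d (p z) (q z) (r z) :=
  hd.comp (g := ![p, q, r]) (Fin.forall_fin_succ.2 ⟨hp, Fin.forall_fin_two.2 ⟨hq, hr⟩⟩)

end PolyOp

theorem IsCong.map_polyOp {A : Type} {C : Clone A} {θ : A → A → Prop} (hθ : IsCong C θ)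
    {n : ℕ} {p : (Fin n → A) → A} (hp : PolyOp C n p) {a b : Fin n → A}
    (hab : ∀ i, θ (a i) (b i)) : θ (p a) (p b) := by
  induction hp with
  | base hf => exact hθ.2 _ _ hf a b hab
  | const c => exact hθ.1.refl c
  | proj i => exact hab i
  | comp _ _ ihf ihg => exact ihf fun i => ihg i hab

section PolyPairs

variable {A : Type} {C : Clone A} {k : ℕ}

def PolyPairs (C : Clone A) (a b : Fin k → A) (x y : A) : Prop :=
  ∃ p : (Fin k → A) → A, PolyOp C k p ∧ x = p a ∧ y = p b

variable {a b : Fin k → A}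

theorem polyPairs_refl (x : A) : PolyPairs C a b x x :=
  ⟨fun _ => x, .const x, rfl, rfl⟩

theorem polyPairs_generator (i : Fin k) : PolyPairs C a b (a i) (b i) :=
  ⟨fun z => z i, .proj i, rfl, rfl⟩

theorem polyPairs_compatible {n : ℕ} {f : (Fin n → A) → A} (hf : f ∈ C.ops n)
    {x y : Fin n → A} (hxy : ∀ i, PolyPairs C a b (x i) (y i)) :
    PolyPairs C a b (f x) (f y) := by
  choose p hp hx hy using hxy
  exact ⟨fun z => f fun i => p i z, (PolyOp.base hf).comp hp,
    congrArg f (funext hx), congrArg f (funext hy)⟩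

theorem polyPairs_symm {d : A → A → A → A} (hd : PolyOp C 3 fun x => d (x 0) (x 1) (x 2))
    (hMd : IsMalcev d) {x y : A} : PolyPairs C a b x y → PolyPairs C a b y x := by
  rintro ⟨p, hp, rfl, rfl⟩
  exact ⟨fun z => d (p a) (p z) (p b), hd.comp₃ (.const _) hp (.const _),
    ((hMd _ _).2).symm, ((hMd _ _).1).symm⟩

theorem polyPairs_trans {d : A → A → A → A} (hd : PolyOp C 3 fun x => d (x 0) (x 1) (x 2))
    (hMd : IsMalcev d) {x y z : A} :
    PolyPairs C a b x y → PolyPairs C a b y z → PolyPairs C a b x z := by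
  rintro ⟨p, hp, rfl, rfl⟩ ⟨q, hq, hpq, rfl⟩
  refine ⟨fun w => d (p w) (p b) (q w), hd.comp₃ hp (.const _) hq, ?_, ((hMd _ _).2).symm⟩
  show p a = d (p a) (p b) (q a)
  rw [← hpq, (hMd _ _).1]

theorem isCong_polyPairs (hM : HasMalcevPoly C) : IsCong C (PolyPairs C a b) := by
  obtain ⟨d, hd, hMd⟩ := hM
  exact ⟨⟨polyPairs_refl, polyPairs_symm hd hMd, polyPairs_trans hd hMd⟩,
    fun _ _ hf _ _ => polyPairs_compatible hf⟩

end PolyPairs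

/-- In an algebra with a Mal'cev polynomial, the congruence generated by the
pairs `(a i, b i)` consists exactly of the pairs `(p(a), p(b))` for `k`-ary
polynomial operations `p`. -/
theorem stmt13 {A : Type} (C : Clone A) (hM : HasMalcevPoly C) (k : ℕ)
    (a b : Fin k → A) (x y : A) :
    CongGen C (fun u v => ∃ i : Fin k, u = a i ∧ v = b i) x y ↔
      ∃ p : (Fin k → A) → A, p ∈ (PolClone C).ops k ∧ x = p a ∧ y = p b := by
  constructor
  · intro h
    exact h _ (isCong_polyPairs hM) fun _ _ ⟨i, hu, hv⟩ => hu ▸ hv ▸ polyPairs_generator i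
  · rintro ⟨p, hp, rfl, rfl⟩ θ hθ hgen
    exact hθ.map_polyOp hp fun i => hgen _ _ ⟨i, rfl, rfl⟩
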